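/- arXiv:2407.09753 — 3 statements merged into one kernel-verified Lean document; each statement's English description precedes it below -/
import Mathlib

section
/- Let ε ≥ 0 and let Q, E, M, P, A : ℕ → ℝ be sequences with M(t) ≥ 0, P(t) ≥ 0, A(t) ≥ 0 and Q(t) > 0 for all t, satisfying the recursions Q(t+1) = max(Q(t) − M(t), 0) + P(t) + A(t) and E(t+1) = (1+ε)·E(t)·max(1 − M(t)/Q(t), 0) + P(t) + A(t), with E(0) ≥ Q(0). Then E(t) ≥ Q(t) for all t ∈ ℕ. -/
/-- The expQ metric dominates the queue length for all time:
if `Q (t+1) = max (Q t - M t) 0 + P t + A t`,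
`E (t+1) = (1 + ε) * E t * max (1 - M t / Q t) 0 + P t + A t`,
`E 0 ≥ Q 0`, with `M t, P t, A t ≥ 0` and `Q t > 0` for all `t`,
then `E t ≥ Q t` for all `t`. -/
theorem expQ_dominates_queue (ε : ℝ) (Q E M P A : ℕ → ℝ)
    (hε : 0 ≤ ε)
    (hM : ∀ t, 0 ≤ M t) (hP : ∀ t, 0 ≤ P t) (hA : ∀ t, 0 ≤ A t)
    (hQpos : ∀ t, 0 < Q t)
    (hQrec : ∀ t, Q (t + 1) = max (Q t - M t) 0 + P t + A t)
    (hErec : ∀ t, E (t + 1) = (1 + ε) * E t * max (1 - M t / Q t) 0 + P t + A t)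
    (h0 : Q 0 ≤ E 0) :
    ∀ t : ℕ, Q t ≤ E t := by
  intro t
  induction t with
  | zero => exact h0
  | succ t ih =>
    rw [hQrec t, hErec t]
    have hq := hQpos t
    have hkey : max (Q t - M t) 0 = Q t * max (1 - M t / Q t) 0 := by
      rw [mul_max_of_nonneg _ _ hq.le, mul_zero]
      congr 1
      field_simp
    have hmaxnn : (0 : ℝ) ≤ max (1 - M t / Q t) 0 := le_max_right _ _
    have h1 : Q t * max (1 - M t / Q t) 0 ≤ (1 + ε) * E t * max (1 - M t / Q t) 0 := by
      apply mul_le_mul_of_nonneg_right _ hmaxnn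
      calc Q t ≤ E t := ih
        _ = 1 * E t := (one_mul _).symm
        _ ≤ (1 + ε) * E t := by
            apply mul_le_mul_of_nonneg_right (by linarith) (hq.le.trans ih)
    rw [hkey]
    linarith
end

section
/- Let E, Q, m, ε, b, B, p, a be real numbers with 0 < Q ≤ E, m ≥ 0, ε ≥ 0, ε·E ≤ b, B ≥ 0, p ≥ 0 and a ≥ 0. Set E' = (1+ε)·E·max(1 − m/Q, 0) + p + a, Ũ = E + B, and Ũ' = E' + B. Then Ũ' ≤ max(Ũ − m, B) + p + a + b. -/
/-- Inequality (27) of the paper: with `E' = (1+ε)·E·max(1 − m/Q, 0) + p + a`,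
`Utilde = E + B`, `Utilde' = E' + B`, under `0 < Q ≤ E`, `m ≥ 0`, `ε ≥ 0`, `ε·E ≤ b`,
`B ≥ 0`, `p ≥ 0`, `a ≥ 0`, we have `Utilde' ≤ max (Utilde − m) B + p + a + b`. -/
theorem expQ_biased_backlog_bound (E Q m ε b B p a E' Utilde Utilde' : ℝ)
    (hQ : 0 < Q) (hQE : Q ≤ E) (hm : 0 ≤ m) (hε : 0 ≤ ε) (hεE : ε * E ≤ b)
    (hB : 0 ≤ B) (hp : 0 ≤ p) (ha : 0 ≤ a)
    (hE' : E' = (1 + ε) * E * max (1 - m / Q) 0 + p + a)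
    (hU : Utilde = E + B) (hU' : Utilde' = E' + B) :
    Utilde' ≤ max (Utilde - m) B + p + a + b := by
  have hE : 0 < E := lt_of_lt_of_le hQ hQE
  have key : E * max (1 - m / Q) 0 ≤ max (E - m) 0 := by
    rcases le_or_gt m Q with h | h
    · have h1 : 0 ≤ 1 - m / Q := by
        rw [sub_nonneg, div_le_one hQ]; exact h
      rw [max_eq_left h1]
      calc E * (1 - m / Q) = E - E / Q * m := by field_simp
        _ ≤ E - m := by
            have : m ≤ E / Q * m := le_mul_of_one_le_left hm ((one_le_div hQ).mpr hQE)
            linarith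
        _ ≤ max (E - m) 0 := le_max_left _ _
    · have h1 : 1 - m / Q ≤ 0 := by
        rw [sub_nonpos, le_div_iff₀ hQ, one_mul]; exact h.le
      rw [max_eq_right h1, mul_zero]; exact le_max_right _ _
  have hmax0 : (0:ℝ) ≤ max (1 - m / Q) 0 := le_max_right _ _
  have key2 : (1 + ε) * E * max (1 - m / Q) 0 ≤ max (E - m) 0 + b := by
    have : (1 + ε) * E * max (1 - m / Q) 0
        = E * max (1 - m / Q) 0 + ε * (E * max (1 - m / Q) 0) := by ring
    rw [this]
    have hεpart : ε * (E * max (1 - m / Q) 0) ≤ b := by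
      have hle1 : max (1 - m / Q) 0 ≤ 1 := by
        apply max_le _ zero_le_one
        have : 0 ≤ m / Q := div_nonneg hm hQ.le
        linarith
      calc ε * (E * max (1 - m / Q) 0) ≤ ε * E := by
            apply mul_le_mul_of_nonneg_left _ hε
            calc E * max (1 - m / Q) 0 ≤ E * 1 := by
                  exact mul_le_mul_of_nonneg_left hle1 hE.le
              _ = E := mul_one E
        _ ≤ b := hεE
    linarith
  have key3 : max (E - m) 0 + B ≤ max (E + B - m) B := by
    rcases le_max_iff.mp (le_refl (max (E - m) 0)) with _ | _ <;>
    · rcases max_cases (E - m) 0 with ⟨h1, _⟩ | ⟨h1, _⟩ <;> rw [h1]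
      · have : E + B - m ≤ max (E + B - m) B := le_max_left _ _; linarith
      · simpa using le_max_right (E + B - m) B
  subst hE' hU hU'
  calc (1 + ε) * E * max (1 - m / Q) 0 + p + a + B
      ≤ (max (E - m) 0 + b) + p + a + B := by linarith
    _ ≤ max (E + B - m) B + p + a + b := by linarith
end

section
/- Let ι be a finite nonempty set, let U, o, p : ℕ → ι → ℝ and b : ι → ℝ satisfy: o(t,i) ≥ 0, p(t,i) ≥ 0, b(i) ≥ 0 and U(0,i) ≥ 0 for all t and i; U(t+1, i) = max(U(t,i) − o(t,i), b(i)) + p(t,i) for all t and i. Suppose there exist a real W and β > 0 such that for all t: (1/2) · Σ_{i∈ι} ( o(t,i)² + p(t,i)² + b(i)² + 2·b(i)·p(t,i) ) ≤ W, and p(t,i) − o(t,i) ≤ −β for all i. Then limsup_{t→∞} (1/t) · Σ_{τ=0}^{t−1} Σ_{i∈ι} U(τ, i) ≤ W / β. -/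
open Filter

/-- Deterministic core of Theorem 1 (throughput optimality of SP-BP):
with `U (t+1) i = max (U t i - o t i) (b i) + p t i`, nonnegativity of
`o`, `p`, `b`, `U 0`, a drift constant `W` bounding the second-moment terms,
and slack `β > 0` with `p t i - o t i ≤ -β`, the time-averaged total backlog
satisfies `limsup_{t→∞} (1/t) ∑_{τ<t} ∑_i U τ i ≤ W / β`. -/
theorem spbp_strong_stability {ι : Type*} [Fintype ι] [Nonempty ι]
    (U o p : ℕ → ι → ℝ) (b : ι → ℝ) (W β : ℝ)
    (ho : ∀ t i, 0 ≤ o t i) (hp : ∀ t i, 0 ≤ p t i) (hb : ∀ i, 0 ≤ b i)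
    (hU0 : ∀ i, 0 ≤ U 0 i)
    (hrec : ∀ t i, U (t + 1) i = max (U t i - o t i) (b i) + p t i)
    (hβ : 0 < β)
    (hW : ∀ t, (1 / 2) * ∑ i : ι,
        ((o t i) ^ 2 + (p t i) ^ 2 + (b i) ^ 2 + 2 * b i * p t i) ≤ W)
    (hslack : ∀ t i, p t i - o t i ≤ -β) :
    Filter.limsup
        (fun t : ℕ => (1 / (t : ℝ)) * ∑ τ ∈ Finset.range t, ∑ i : ι, U τ i)
        Filter.atTop ≤ W / β := by
  have hUnn : ∀ t i, 0 ≤ U t i := by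
    intro t
    induction t with
    | zero => exact hU0
    | succ n ih =>
        intro i
        rw [hrec]
        have h1 := le_max_right (U n i - o n i) (b i)
        have := hb i; have := hp n i
        linarith
  set L : ℕ → ℝ := fun t => (1/2) * ∑ i : ι, (U t i)^2 with hL
  have hLnn : ∀ t, 0 ≤ L t := by
    intro t
    have : 0 ≤ ∑ i : ι, (U t i)^2 := Finset.sum_nonneg fun i _ => sq_nonneg _
    simp only [hL]; linarith
  have hdrift : ∀ t, β * ∑ i : ι, U t i ≤ W + L t - L (t+1) := by
    intro t
    have key : ∀ i, (U (t+1) i)^2 ≤ (U t i)^2 - 2 * β * U t i +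
        ((o t i)^2 + (p t i)^2 + (b i)^2 + 2 * b i * p t i) := by
      intro i
      rw [hrec]
      set m := max (U t i - o t i) (b i) with hm
      have hm1 : m^2 ≤ (U t i - o t i)^2 + (b i)^2 := by
        rcases max_cases (U t i - o t i) (b i) with ⟨h1, _⟩ | ⟨h1, _⟩ <;>
          rw [hm, h1] <;> nlinarith [sq_nonneg (U t i - o t i), sq_nonneg (b i)]
      have hm2 : m ≤ U t i + b i := by
        rcases max_cases (U t i - o t i) (b i) with ⟨h1, _⟩ | ⟨h1, _⟩ <;> rw [hm, h1]
        · linarith [ho t i, hb i]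
        · linarith [hUnn t i]
      have hs := hslack t i
      nlinarith [hp t i, hUnn t i, hb i, ho t i]
    have hsum : ∑ i : ι, (U (t+1) i)^2 ≤
        ∑ i : ι, ((U t i)^2 - 2 * β * U t i +
          ((o t i)^2 + (p t i)^2 + (b i)^2 + 2 * b i * p t i)) :=
      Finset.sum_le_sum fun i _ => key i
    have hW' := hW t
    simp only [hL]
    rw [Finset.sum_add_distrib, Finset.sum_sub_distrib, ← Finset.mul_sum] at hsum
    linarith
  have htel : ∀ T : ℕ, β * ∑ τ ∈ Finset.range T, ∑ i : ι, U τ i + L T ≤ T * W + L 0 := by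
    intro T
    induction T with
    | zero => simp
    | succ n ih =>
        rw [Finset.sum_range_succ, mul_add]
        have := hdrift n
        push_cast
        linarith
  have hbound : ∀ᶠ T : ℕ in atTop,
      (1 / (T : ℝ)) * ∑ τ ∈ Finset.range T, ∑ i : ι, U τ i ≤ W / β + (L 0 / β) / T := by
    filter_upwards [eventually_ge_atTop 1] with T hT
    have hT' : (0:ℝ) < T := by exact_mod_cast hT
    have h1 := htel T
    have h2 : β * ∑ τ ∈ Finset.range T, ∑ i : ι, U τ i ≤ T * W + L 0 := by
      linarith [hLnn T]
    have h3 : (1 / (T : ℝ)) * ∑ τ ∈ Finset.range T, ∑ i : ι, U τ i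
        ≤ (T * W + L 0) / (β * T) := by
      rw [le_div_iff₀ (by positivity)]
      have he : (1 / (T:ℝ)) * (∑ τ ∈ Finset.range T, ∑ i : ι, U τ i) * (β * T)
          = β * ∑ τ ∈ Finset.range T, ∑ i : ι, U τ i := by
        field_simp
      rw [he]; exact h2
    calc (1 / (T : ℝ)) * ∑ τ ∈ Finset.range T, ∑ i : ι, U τ i
        ≤ (T * W + L 0) / (β * T) := h3
      _ = W / β + (L 0 / β) / T := by field_simp
  have htends : Tendsto (fun T : ℕ => W / β + (L 0 / β) / T) atTop (nhds (W / β)) := by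
    have : Tendsto (fun T : ℕ => (L 0 / β) / (T:ℝ)) atTop (nhds 0) :=
      tendsto_const_nhds.div_atTop tendsto_natCast_atTop_atTop
    simpa using tendsto_const_nhds.add this
  have hcob : IsCoboundedUnder (· ≤ ·) atTop
      (fun t : ℕ => (1 / (t : ℝ)) * ∑ τ ∈ Finset.range t, ∑ i : ι, U τ i) := by
    refine IsBoundedUnder.isCoboundedUnder_le ⟨0, eventually_map.2 (Eventually.of_forall fun t => ?_)⟩
    have h0 : 0 ≤ ∑ τ ∈ Finset.range t, ∑ i : ι, U τ i :=
      Finset.sum_nonneg fun τ _ => Finset.sum_nonneg fun i _ => hUnn τ i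
    positivity
  calc Filter.limsup
        (fun t : ℕ => (1 / (t : ℝ)) * ∑ τ ∈ Finset.range t, ∑ i : ι, U τ i) atTop
      ≤ Filter.limsup (fun T : ℕ => W / β + (L 0 / β) / T) atTop :=
        limsup_le_limsup hbound hcob htends.isBoundedUnder_le
    _ = W / β := htends.limsup_eq
end
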